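/- Given any cost-optimal basic tree T for a displacement sequence D which contains an idx node N with count 1, there exists a representation T' of D of equal cost in which such a count-1 idx node is the root. -/
import Mathlib


inductive TT : Type where
  | con : ℕ → TT
  | vec : ℕ → ℤ → TT → TT
  | idx : List ℤ → TT → TT
  | strc : List (ℤ × TT) → TT

theorem TT.sizeOf_snd_lt {ps : List (ℤ × TT)} (p : {x // x ∈ ps}) :
    sizeOf (p.1).2 < sizeOf (TT.strc ps) := by
  obtain ⟨⟨a, b⟩, hp⟩ := p
  have := List.sizeOf_lt_of_mem hp
  simp at this ⊢
  omega

def flatten : TT → List ℤ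
  | .con c => (List.range c).map (fun i => (i : ℤ))
  | .vec c d C => (List.range c).flatMap (fun i => (flatten C).map (· + (i : ℤ) * d))
  | .idx I C => I.flatMap (fun s => (flatten C).map (· + s))
  | .strc ps => ps.attach.flatMap (fun p => (flatten p.1.2).map (· + p.1.1))
decreasing_by
  all_goals first
  | exact TT.sizeOf_snd_lt _
  | decreasing_tactic

def cost (kc kv ki ks kl : ℕ) : TT → ℕ
  | .con _ => kc
  | .vec _ _ C => kv + cost kc kv ki ks kl C
  | .idx I C => ki + I.length * kl + cost kc kv ki ks kl C
  | .strc ps => ks + 2 * ps.length * kl + (ps.attach.map (fun p => cost kc kv ki ks kl p.1.2)).sum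
decreasing_by
  all_goals first
  | exact TT.sizeOf_snd_lt _
  | decreasing_tactic

/-- The tree contains an `idx` node with count 1. -/
def HasIdx1 : TT → Prop
  | .con _ => False
  | .vec _ _ C => HasIdx1 C
  | .idx I C => I.length = 1 ∨ HasIdx1 C
  | .strc ps => ∃ p ∈ ps.attach, HasIdx1 p.1.2
decreasing_by
  all_goals first
  | exact TT.sizeOf_snd_lt _
  | decreasing_tactic

/-- `T` is a cost-optimal basic tree representing `D`
(cost model: all node constants equal to `K`, lookup cost 1). -/
def Optimal (K : ℕ) (D : List ℤ) (T : TT) : Prop :=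
  flatten T = D ∧ ∀ T' : TT, flatten T' = D → cost K K K K 1 T ≤ cost K K K K 1 T'


lemma flatten_strc (ps : List (ℤ × TT)) :
    flatten (TT.strc ps) = ps.flatMap (fun p => (flatten p.2).map (· + p.1)) := by
  rw [flatten]
  conv_rhs => rw [← List.attach_map_subtype_val ps, List.flatMap_map]

lemma cost_strc (kc kv ki ks kl : ℕ) (ps : List (ℤ × TT)) :
    cost kc kv ki ks kl (TT.strc ps)
      = ks + 2 * ps.length * kl + (ps.map (fun p => cost kc kv ki ks kl p.2)).sum := by
  rw [cost]
  congr 1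
  conv_rhs => rw [← List.attach_map_subtype_val ps, List.map_map]
  rfl

lemma extract (K : ℕ) : (T : TT) → HasIdx1 T →
    ∃ (s : ℤ) (T' : TT),
      flatten T = (flatten T').map (· + s) ∧
      cost K K K K 1 T = (K + 1) + cost K K K K 1 T'
  | .con _, h => by rw [HasIdx1] at h; exact h.elim
  | .vec c d C, h => by
      rw [HasIdx1] at h
      obtain ⟨s, C', hf, hc⟩ := extract K C h
      refine ⟨s, .vec c d C', ?_, ?_⟩
      · simp only [flatten, hf, List.map_flatMap, List.map_map]
        apply List.flatMap_congr
        intro i _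
        apply List.map_congr_left
        intro x _
        simp [Function.comp]
        ring
      · simp only [cost, hc]; omega
  | .idx I C, h => by
      rw [HasIdx1] at h
      rcases h with h | h
      · obtain ⟨s, hI⟩ : ∃ s, I = [s] := by
          cases I with
          | nil => simp at h
          | cons a t => cases t with
            | nil => exact ⟨a, rfl⟩
            | cons b t => simp at h
        subst hI
        refine ⟨s, C, ?_, ?_⟩
        · simp [flatten]
        · simp [cost]
      · obtain ⟨s, C', hf, hc⟩ := extract K C h
        refine ⟨0, .idx (I.map (· + s)) C', ?_, ?_⟩
        · simp only [flatten, hf, List.flatMap_map, List.map_flatMap, List.map_map]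
          apply List.flatMap_congr
          intro i _
          apply List.map_congr_left
          intro x _
          simp [Function.comp]
          ring
        · simp only [cost, hc, List.length_map]; omega
  | .strc ps, h => by
      rw [HasIdx1] at h
      obtain ⟨⟨⟨a, b⟩, hp⟩, -, hb⟩ := h
      obtain ⟨s, b', hf, hc⟩ := extract K b hb
      obtain ⟨l1, l2, hps⟩ := List.append_of_mem hp
      refine ⟨0, .strc (l1 ++ (a + s, b') :: l2), ?_, ?_⟩
      · rw [flatten_strc, flatten_strc, hps]
        simp only [List.flatMap_append, List.flatMap_cons, hf, List.map_map,
          add_zero, List.map_id']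
        have hfun : ((fun x => x + a) ∘ fun x : ℤ => x + s) = (fun x : ℤ => x + (a + s)) := by
          funext x; simp [Function.comp]; ring
        rw [hfun]
      · rw [cost_strc, cost_strc, hps]
        simp only [List.map_append, List.map_cons, List.sum_append, List.sum_cons,
          List.length_append, List.length_cons]
        simp only [hc]
        omega
decreasing_by
  all_goals first
  | exact TT.sizeOf_snd_lt ⟨(a, b), hp⟩
  | decreasing_tactic

theorem stmt14 (K : ℕ) (hK : 0 < K) (D : List ℤ) (T : TT)
    (hopt : Optimal K D T) (h1 : HasIdx1 T) :
    ∃ (i₀ : ℤ) (C : TT),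
      flatten (TT.idx [i₀] C) = D ∧
      cost K K K K 1 (TT.idx [i₀] C) = cost K K K K 1 T := by
  obtain ⟨hfl, -⟩ := hopt
  obtain ⟨s, C, hf, hc⟩ := extract K T h1
  refine ⟨s, C, ?_, ?_⟩
  · simp [flatten, ← hf, hfl]
  · simp [cost, hc]
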